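/- Let n ≥ 1 and 1 ≤ h ≤ n be integers, let a ∈ ℚ^{h+1} be nonzero, and let B ∈ M₂(ℤ) with det B ≠ 0. Then the image of L_a under the linear map x ↦ φ_n(B)x equals L_b, where b = (φ_h(B^{−1}))ᵀ·a (here B^{−1} ∈ M₂(ℚ) and φ_h is applied to it via the same formula over ℚ). -/

import Mathlib

/-- For a 2×2 matrix `B = ((a,b),(c,d))` over a commutative ring, `phiMap n B` is the
`(n+1)×(n+1)` matrix whose `(i,j)` entry is the coefficient of `x^j` in the polynomial
`(ax+b)^i (cx+d)^{n−i}`. -/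
noncomputable def phiMap {R : Type*} [CommRing R] (n : ℕ) (B : Matrix (Fin 2) (Fin 2) R) :
    Matrix (Fin (n + 1)) (Fin (n + 1)) R :=
  Matrix.of fun i j =>
    ((Polynomial.C (B 0 0) * Polynomial.X + Polynomial.C (B 0 1)) ^ (i : ℕ) *
      (Polynomial.C (B 1 0) * Polynomial.X + Polynomial.C (B 1 1)) ^ (n - (i : ℕ))).coeff
      (j : ℕ)

/-- For `a ∈ ℝ^{h+1}`, `L_a ⊆ ℝ^{n+1}` is the subspace of all `x = (x₀, …, x_n)` with
`a₀x_j + a₁x_{j+1} + … + a_h x_{j+h} = 0` for all `0 ≤ j ≤ n−h`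
(the index `j + i` is reduced mod `n+1`, which has no effect when `h ≤ n`). -/
def Lsub (n h : ℕ) (a : Fin (h + 1) → ℝ) : Set (Fin (n + 1) → ℝ) :=
  {x | ∀ j : ℕ, j ≤ n - h →
    ∑ i : Fin (h + 1), a i * x ⟨(j + i.1) % (n + 1), Nat.mod_lt _ n.succ_pos⟩ = 0}

/-!
Read `x ∈ ℝ^{n+1}` as the linear form `P ↦ ∑ xₘ Pₘ` on polynomials of degree `≤ n`. Then
`x ∈ L_a` says that `x` kills every multiple `a(X) Q` with `deg Q ≤ n - h`, and `φ_n(B)ᵀ` is the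
matrix of the substitution `S_Bⁿ : p ↦ (cX + d)ⁿ p((aX + b)/(cX + d))`. Through homogenization,
`S_B` is multiplicative, `S_B^{m+k}(p q) = S_Bᵐ(p) S_Bᵏ(q)`, and a right action of `M₂`. Hence
`φ_n(B) x` kills `b(X) Q` iff `x` kills `S_Bⁿ(b Q) = S_Bʰ(b) S_B^{n-h}(Q) = a S_B^{n-h}(Q)`, and
`S_B^{n-h}` permutes the polynomials of degree `≤ n - h`.
-/

open Polynomial Matrix

section CommRing

variable {R : Type*} [CommRing R]

noncomputable def rowLinearPoly (B : Matrix (Fin 2) (Fin 2) R) (r : Fin 2) : R[X] :=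
  C (B r 0) * X + C (B r 1)

noncomputable def rowLinearForm (B : Matrix (Fin 2) (Fin 2) R) (r : Fin 2) :
    MvPolynomial (Fin 2) R :=
  .C (B r 0) * .X 0 + .C (B r 1) * .X 1

-- `(cX + d)ⁿ p((aX + b)/(cX + d))` for `B = !![a, b; c, d]`, computed without division.
noncomputable def moebiusSubst (n : ℕ) (B : Matrix (Fin 2) (Fin 2) R) (p : R[X]) : R[X] :=
  MvPolynomial.aeval (rowLinearPoly B) (p.homogenize n)

theorem moebiusSubst_eq_sum (n : ℕ) (B : Matrix (Fin 2) (Fin 2) R) (p : R[X]) :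
    moebiusSubst n B p = ∑ k ∈ Finset.range (n + 1),
      C (p.coeff k) * rowLinearPoly B 0 ^ k * rowLinearPoly B 1 ^ (n - k) := by
  rw [moebiusSubst, homogenize, map_sum, Finset.Nat.sum_antidiagonal_eq_sum_range_succ_mk]
  refine Finset.sum_congr rfl fun k _ => ?_
  simp [MvPolynomial.aeval_monomial, Finsupp.prod_fintype, Polynomial.C_eq_algebraMap, mul_assoc]

theorem natDegree_moebiusSubst_le (n : ℕ) (B : Matrix (Fin 2) (Fin 2) R) (p : R[X]) :
    (moebiusSubst n B p).natDegree ≤ n := by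
  rw [moebiusSubst_eq_sum]
  refine natDegree_sum_le_of_forall_le _ _ fun k hk => ?_
  have hdeg (r : Fin 2) (m : ℕ) : (rowLinearPoly B r ^ m).natDegree ≤ m :=
    natDegree_pow_le_of_le m natDegree_linear_le |>.trans (by simp)
  calc _ ≤ (C (p.coeff k) * rowLinearPoly B 0 ^ k).natDegree +
        (rowLinearPoly B 1 ^ (n - k)).natDegree := natDegree_mul_le
    _ ≤ k + (n - k) := add_le_add (natDegree_C_mul_le _ _ |>.trans (hdeg 0 k)) (hdeg 1 _)
    _ = n := Nat.add_sub_of_le (Nat.lt_succ_iff.mp (Finset.mem_range.mp hk))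

theorem moebiusSubst_mul (B : Matrix (Fin 2) (Fin 2) R) {p q : R[X]} {m k : ℕ}
    (hp : p.natDegree ≤ m) (hq : q.natDegree ≤ k) :
    moebiusSubst (m + k) B (p * q) = moebiusSubst m B p * moebiusSubst k B q := by
  rw [moebiusSubst, homogenize_mul p q hp hq, map_mul, moebiusSubst, moebiusSubst]

theorem moebiusSubst_one {n : ℕ} {p : R[X]} (hp : p.natDegree ≤ n) :
    moebiusSubst n 1 p = p := by
  have : rowLinearPoly (1 : Matrix (Fin 2) (Fin 2) R) = ![X, 1] := by
    ext1 r; fin_cases r <;> simp [rowLinearPoly, Matrix.one_fin_two]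
  rw [moebiusSubst, this, aeval_homogenize_X_one p hp]

theorem homogenize_moebiusSubst (n : ℕ) (B : Matrix (Fin 2) (Fin 2) R) (p : R[X]) :
    (moebiusSubst n B p).homogenize n =
      MvPolynomial.bind₁ (rowLinearForm B) (p.homogenize n) := by
  refine homogenize_eq_of_isHomogeneous ?_ ?_
  · simpa using (isHomogeneous_homogenize p).aeval (rowLinearForm B) fun r =>
      ((MvPolynomial.isHomogeneous_C_mul_X _ 0).add (MvPolynomial.isHomogeneous_C_mul_X _ 1))
  · rw [MvPolynomial.aeval_bind₁, moebiusSubst]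
    congr 1
    ext1 r
    simp [rowLinearForm, rowLinearPoly]

theorem moebiusSubst_moebiusSubst (n : ℕ) (B B' : Matrix (Fin 2) (Fin 2) R) (p : R[X]) :
    moebiusSubst n B' (moebiusSubst n B p) = moebiusSubst n (B * B') p := by
  rw [moebiusSubst, homogenize_moebiusSubst, MvPolynomial.aeval_bind₁, moebiusSubst]
  congr 1
  ext1 r
  simp only [rowLinearForm, rowLinearPoly, map_add, map_mul, MvPolynomial.aeval_C,
    MvPolynomial.aeval_X, Matrix.mul_apply, Fin.sum_univ_two, Polynomial.algebraMap_eq]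
  ring

theorem forall_natDegree_le_moebiusSubst_iff {d : ℕ}
    {A A' : Matrix (Fin 2) (Fin 2) R} (hA'A : A' * A = 1) {P : R[X] → Prop} :
    (∀ Q : R[X], Q.natDegree ≤ d → P (moebiusSubst d A Q)) ↔
      ∀ Q : R[X], Q.natDegree ≤ d → P Q := by
  refine ⟨fun hP Q hQ => ?_, fun hP Q _ => hP _ (natDegree_moebiusSubst_le d A Q)⟩
  simpa [moebiusSubst_moebiusSubst, hA'A, moebiusSubst_one hQ] using
    hP _ (natDegree_moebiusSubst_le d A' Q)

theorem transpose_phiMap_mulVec [DecidableEq R] (n : ℕ) (B : Matrix (Fin 2) (Fin 2) R)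
    (v : Fin (n + 1) → R) :
    (phiMap n B)ᵀ *ᵥ v = toFn (n + 1) (moebiusSubst n B (ofFn (n + 1) v)) := by
  ext j
  simp only [toFn, LinearMap.pi_apply, lcoeff_apply, moebiusSubst_eq_sum, finsetSum_coeff,
    ← Fin.sum_univ_eq_sum_range (fun k => (C ((ofFn (n + 1) v).coeff k) *
      rowLinearPoly B 0 ^ k * rowLinearPoly B 1 ^ (n - k)).coeff j)]
  simp only [mulVec, dotProduct, transpose_apply]
  refine Finset.sum_congr rfl fun k _ => ?_
  rw [ofFn_coeff_eq_val_of_lt _ k.isLt, mul_assoc, coeff_C_mul, mul_comm]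
  rfl

theorem phiMap_one (n : ℕ) : phiMap n (1 : Matrix (Fin 2) (Fin 2) R) = 1 := by
  classical
  rw [← transpose_eq_one, ext_iff_mulVec]
  intro v
  rw [transpose_phiMap_mulVec, moebiusSubst_one, toFn_comp_ofFn_eq_id, one_mulVec]
  exact Nat.le_of_lt_succ (ofFn_natDegree_lt n.succ_pos v)

theorem phiMap_mul (n : ℕ) (B B' : Matrix (Fin 2) (Fin 2) R) :
    phiMap n (B * B') = phiMap n B * phiMap n B' := by
  classical
  rw [← transpose_inj, ext_iff_mulVec]
  intro v
  rw [transpose_mul, ← mulVec_mulVec, transpose_phiMap_mulVec, transpose_phiMap_mulVec,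
    transpose_phiMap_mulVec, ofFn_comp_toFn_eq_id_of_natDegree_lt, moebiusSubst_moebiusSubst]
  exact Nat.lt_succ_of_le (natDegree_moebiusSubst_le _ _ _)

theorem phiMap_map {S : Type*} [CommRing S] (f : R →+* S) (n : ℕ)
    (B : Matrix (Fin 2) (Fin 2) R) :
    (phiMap n B).map f = phiMap n (B.map f) := by
  ext i j
  simp [phiMap, ← Polynomial.coeff_map, Polynomial.map_mul, Polynomial.map_pow]

theorem phiMap_mulVec_dotProduct_toFn [DecidableEq R] {n : ℕ} (B : Matrix (Fin 2) (Fin 2) R)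
    (x : Fin (n + 1) → R) {P : R[X]} (hP : P.natDegree ≤ n) :
    (phiMap n B *ᵥ x) ⬝ᵥ toFn (n + 1) P = x ⬝ᵥ toFn (n + 1) (moebiusSubst n B P) := by
  rw [dotProduct_comm, dotProduct_mulVec, ← mulVec_transpose, transpose_phiMap_mulVec,
    ofFn_comp_toFn_eq_id_of_natDegree_lt (Nat.lt_succ_of_le hP), dotProduct_comm]

theorem dotProduct_toFn_ofFn_mul_X_pow [DecidableEq R] {n h j : ℕ}
    (hj : j + h ≤ n) (c : Fin (h + 1) → R) (x : Fin (n + 1) → R) :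
    x ⬝ᵥ toFn (n + 1) (ofFn (h + 1) c * X ^ j) =
      ∑ i : Fin (h + 1), c i * x ⟨(j + i) % (n + 1), Nat.mod_lt _ n.succ_pos⟩ := by
  rw [ofFn_eq_sum_monomial, Finset.sum_mul, map_sum, dotProduct_sum]
  refine Finset.sum_congr rfl fun i _ => ?_
  have hi : j + i < n + 1 := by omega
  simp only [Nat.mod_eq_of_lt hi, monomial_mul_X_pow]
  rw [dotProduct, Finset.sum_eq_single ⟨j + i, hi⟩]
  · simp [toFn, add_comm, mul_comm]
  · intro m _ hm
    simp [toFn, coeff_monomial, Fin.ext_iff] at hm ⊢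
    omega
  · simp

end CommRing

theorem mem_Lsub_iff {n h : ℕ} (hhn : h ≤ n) (c : Fin (h + 1) → ℝ) (x : Fin (n + 1) → ℝ) :
    x ∈ Lsub n h c ↔
      ∀ Q : ℝ[X], Q.natDegree ≤ n - h → x ⬝ᵥ toFn (n + 1) (ofFn (h + 1) c * Q) = 0 := by
  refine ⟨fun hx Q hQ => ?_, fun hx j hj => ?_⟩
  · rw [as_sum_range' Q (n - h + 1) (Nat.lt_succ_of_le hQ), Finset.mul_sum, map_sum,
      dotProduct_sum]
    refine Finset.sum_eq_zero fun k hk => ?_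
    have hk : k ≤ n - h := Nat.lt_succ_iff.mp (Finset.mem_range.mp hk)
    rw [← C_mul_X_pow_eq_monomial, mul_left_comm, ← smul_eq_C_mul, map_smul, dotProduct_smul,
      dotProduct_toFn_ofFn_mul_X_pow (by omega), hx k hk, smul_zero]
  · rw [← dotProduct_toFn_ofFn_mul_X_pow (by omega)]
    exact hx _ (by simpa using hj)

theorem phiMap_mulVec_mem_Lsub_iff {n h : ℕ} (hhn : h ≤ n) {A A' : Matrix (Fin 2) (Fin 2) ℝ}
    (hAA' : A * A' = 1) (a : Fin (h + 1) → ℝ) (x : Fin (n + 1) → ℝ) :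
    phiMap n A *ᵥ x ∈ Lsub n h ((phiMap h A')ᵀ *ᵥ a) ↔ x ∈ Lsub n h a := by
  have hA'A : A' * A = 1 := mul_eq_one_comm.mp hAA'
  have ha : (ofFn (h + 1) a).natDegree ≤ h := Nat.le_of_lt_succ (ofFn_natDegree_lt h.succ_pos a)
  have hb : ofFn (h + 1) ((phiMap h A')ᵀ *ᵥ a) = moebiusSubst h A' (ofFn (h + 1) a) := by
    rw [transpose_phiMap_mulVec, ofFn_comp_toFn_eq_id_of_natDegree_lt
      (Nat.lt_succ_of_le (natDegree_moebiusSubst_le _ _ _))]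
  have hsplit (Q : ℝ[X]) (hQ : Q.natDegree ≤ n - h) :
      moebiusSubst n A (moebiusSubst h A' (ofFn (h + 1) a) * Q) =
        ofFn (h + 1) a * moebiusSubst (n - h) A Q := by
    have hmul := moebiusSubst_mul A (natDegree_moebiusSubst_le h A' (ofFn (h + 1) a)) hQ
    rw [Nat.add_sub_cancel' hhn] at hmul
    rw [hmul, moebiusSubst_moebiusSubst, hA'A, moebiusSubst_one ha]
  have hdeg (Q : ℝ[X]) (hQ : Q.natDegree ≤ n - h) :
      (moebiusSubst h A' (ofFn (h + 1) a) * Q).natDegree ≤ n :=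
    natDegree_mul_le.trans (by have := natDegree_moebiusSubst_le h A' (ofFn (h + 1) a); omega)
  rw [mem_Lsub_iff hhn, mem_Lsub_iff hhn, hb]
  calc _ ↔ ∀ Q : ℝ[X], Q.natDegree ≤ n - h →
        x ⬝ᵥ toFn (n + 1) (ofFn (h + 1) a * moebiusSubst (n - h) A Q) = 0 :=
        forall₂_congr fun Q hQ => by
          rw [phiMap_mulVec_dotProduct_toFn _ _ (hdeg Q hQ), hsplit Q hQ]
    _ ↔ _ := forall_natDegree_le_moebiusSubst_iff
        (P := fun Q => x ⬝ᵥ toFn (n + 1) (ofFn (h + 1) a * Q) = 0) hA'A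

theorem image_phiMap_mulVec_Lsub {n h : ℕ} (hhn : h ≤ n) {A A' : Matrix (Fin 2) (Fin 2) ℝ}
    (hAA' : A * A' = 1) (a : Fin (h + 1) → ℝ) :
    (phiMap n A *ᵥ ·) '' Lsub n h a = Lsub n h ((phiMap h A')ᵀ *ᵥ a) := by
  have hsurj : Function.Surjective (phiMap n A *ᵥ ·) := fun y =>
    ⟨phiMap n A' *ᵥ y, by
      dsimp only
      rw [mulVec_mulVec, ← phiMap_mul, hAA', phiMap_one, one_mulVec]⟩
  have hpre : Lsub n h a = (phiMap n A *ᵥ ·) ⁻¹' Lsub n h ((phiMap h A')ᵀ *ᵥ a) :=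
    Set.ext fun x => (phiMap_mulVec_mem_Lsub_iff hhn hAA' a x).symm
  rw [hpre, hsurj.image_preimage]

theorem stmt11_general (n h : ℕ) (h2 : h ≤ n)
    (a : Fin (h + 1) → ℚ)
    (B : Matrix (Fin 2) (Fin 2) ℤ) (hB : B.det ≠ 0) :
    (fun x : Fin (n + 1) → ℝ => ((phiMap n B).map (Int.cast : ℤ → ℝ)).mulVec x) ''
        Lsub n h (fun i => (a i : ℝ)) =
      Lsub n h (fun i =>
        (((phiMap h ((B.map (Int.cast : ℤ → ℚ))⁻¹)).transpose.mulVec a) i : ℝ)) := by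
  set Bq := B.map (Int.cast : ℤ → ℚ)
  have hBq : IsUnit Bq.det := by
    rw [isUnit_iff_ne_zero, ← Int.cast_det]
    exact_mod_cast hB
  have hB_real : (phiMap n B).map (Int.cast : ℤ → ℝ) = phiMap n (Bq.map (Rat.castHom ℝ)) := by
    have hBB : Bq.map (Rat.castHom ℝ) = B.map (Int.castRingHom ℝ) := by ext; simp [Bq]
    rw [hBB, ← phiMap_map]
    rfl
  have hb_real : (fun i => (((phiMap h Bq⁻¹)ᵀ *ᵥ a) i : ℝ)) =
      (phiMap h (Bq⁻¹.map (Rat.castHom ℝ)))ᵀ *ᵥ (fun i => (a i : ℝ)) := by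
    rw [← phiMap_map]
    ext i
    simp [mulVec, dotProduct]
  have hinv : Bq.map (Rat.castHom ℝ) * Bq⁻¹.map (Rat.castHom ℝ) = 1 := by
    rw [← Matrix.map_mul, mul_nonsing_inv Bq hBq, Matrix.map_one _ (map_zero _) (map_one _)]
  rw [hB_real, hb_real]
  exact image_phiMap_mulVec_Lsub h2 hinv _

/-- For a nonzero `a ∈ ℚ^{h+1}` and an integer matrix `B` with `det B ≠ 0`, the image of
`L_a` under `x ↦ φ_n(B)x` equals `L_b` with `b = (φ_h(B⁻¹))ᵀ·a`, where `B⁻¹ ∈ M₂(ℚ)`. -/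
theorem stmt11 (n h : ℕ) (h1 : 1 ≤ h) (h2 : h ≤ n)
    (a : Fin (h + 1) → ℚ) (ha : a ≠ 0)
    (B : Matrix (Fin 2) (Fin 2) ℤ) (hB : B.det ≠ 0) :
    (fun x : Fin (n + 1) → ℝ => ((phiMap n B).map (Int.cast : ℤ → ℝ)).mulVec x) ''
        Lsub n h (fun i => (a i : ℝ)) =
      Lsub n h (fun i =>
        (((phiMap h ((B.map (Int.cast : ℤ → ℚ))⁻¹)).transpose.mulVec a) i : ℝ)) :=
  stmt11_general n h h2 a B hB
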